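/- Let X be a nontrivial real Banach space. If lim_{t→(1/2)⁻} (2·C_Z^I(t) − 1/2)/(1 − 2t) = 0, then X is uniformly smooth, i.e., lim_{t→0⁺} ρ_X(t)/t = 0. -/

import Mathlib

open Set Filter

/-- `C_Z^I(t)`: the sup of `‖t•x + (1-t)•y‖ * ‖(1-t)•x + t•y‖ / ‖x+y‖²` over
pairs `(x, y) ≠ (0, 0)` that are isosceles orthogonal (`‖x+y‖ = ‖x-y‖`). -/
noncomputable def CZI (X : Type*) [NormedAddCommGroup X] [NormedSpace ℝ X] (t : ℝ) : ℝ :=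
  sSup { r : ℝ | ∃ x y : X, (x, y) ≠ (0, 0) ∧ ‖x + y‖ = ‖x - y‖ ∧
    r = ‖t • x + (1 - t) • y‖ * ‖(1 - t) • x + t • y‖ / ‖x + y‖ ^ 2 }

/-- The modulus of smoothness `ρ_X(t)`. -/
noncomputable def rhoX (X : Type*) [NormedAddCommGroup X] [NormedSpace ℝ X] (t : ℝ) : ℝ :=
  sSup { r : ℝ | ∃ x y : X, ‖x‖ = 1 ∧ ‖y‖ = 1 ∧
    r = (‖x + t • y‖ + ‖x - t • y‖) / 2 - 1 }

/-!
For unit vectors `a, b` the pair `(a + b, a - b)` is isosceles orthogonal with `‖x + y‖ = 2`,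
and with `τ = 1 - 2t` it turns the quotient defining `C_Z^I(t)` into `‖a + τb‖ ‖a - τb‖ / 4`.
Writing `s = (‖a + τb‖ + ‖a - τb‖) / 2`, the triangle inequality gives
`‖a + τb‖ ‖a - τb‖ ≥ s² - τ²`, and `s - 1 ≤ (s² - 1) / 2`, hence
`ρ_X(τ) ≤ 2 C_Z^I((1 - τ)/2) - 1/2 + τ²/2`.
Dividing by `τ` and letting `τ → 0⁺` (so `(1 - τ)/2 → 1/2⁻`) gives the claim.
-/

lemma add_div_two_sub_one_le {p q τ : ℝ} (h : (p - q) ^ 2 ≤ (2 * τ) ^ 2) :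
    (p + q) / 2 - 1 ≤ p * q / 2 - 1 / 2 + τ ^ 2 / 2 := by
  nlinarith [sq_nonneg ((p + q) / 2 - 1)]

lemma tendsto_one_sub_div_two_nhdsGT_zero :
    Tendsto (fun τ : ℝ => (1 - τ) / 2) (nhdsWithin 0 (Ioi 0)) (nhdsWithin (1 / 2) (Iio (1 / 2))) := by
  refine tendsto_nhdsWithin_iff.mpr ⟨?_, ?_⟩
  · have h : Tendsto (fun τ : ℝ => (1 - τ) / 2) (nhds 0) (nhds ((1 - 0) / 2)) :=
      (tendsto_const_nhds.sub tendsto_id).div_const 2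
    simpa using h.mono_left nhdsWithin_le_nhds
  · filter_upwards [self_mem_nhdsWithin] with τ (hτ : 0 < τ)
    simp only [mem_Iio]
    linarith

section NormedSpace

variable {X : Type*} [NormedAddCommGroup X] [NormedSpace ℝ X]

lemma norm_left_le_of_norm_add_eq_norm_sub {x y : X} (h : ‖x + y‖ = ‖x - y‖) :
    ‖x‖ ≤ ‖x + y‖ := by
  have h2 : (2 : ℝ) • x = (x + y) + (x - y) := by module
  have := norm_add_le (x + y) (x - y)
  rw [← h2, norm_smul, Real.norm_two] at this
  linarith

lemma norm_right_le_of_norm_add_eq_norm_sub {x y : X} (h : ‖x + y‖ = ‖x - y‖) :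
    ‖y‖ ≤ ‖x + y‖ := by
  have h2 : (2 : ℝ) • y = (x + y) - (x - y) := by module
  have := norm_sub_le (x + y) (x - y)
  rw [← h2, norm_smul, Real.norm_two] at this
  linarith

lemma bddAbove_CZI_set (t : ℝ) :
    BddAbove { r : ℝ | ∃ x y : X, (x, y) ≠ (0, 0) ∧ ‖x + y‖ = ‖x - y‖ ∧
      r = ‖t • x + (1 - t) • y‖ * ‖(1 - t) • x + t • y‖ / ‖x + y‖ ^ 2 } := by
  set c := |t| + |1 - t|
  refine ⟨c ^ 2, ?_⟩
  rintro r ⟨x, y, -, hxy, rfl⟩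
  have hx := norm_left_le_of_norm_add_eq_norm_sub hxy
  have hy := norm_right_le_of_norm_add_eq_norm_sub hxy
  have bound : ∀ u v : ℝ, |u| + |v| = c → ‖u • x + v • y‖ ≤ c * ‖x + y‖ := fun u v huv =>
    calc ‖u • x + v • y‖ ≤ |u| * ‖x‖ + |v| * ‖y‖ := by
          simpa only [norm_smul, Real.norm_eq_abs] using norm_add_le (u • x) (v • y)
      _ ≤ |u| * ‖x + y‖ + |v| * ‖x + y‖ := by gcongr
      _ = c * ‖x + y‖ := by rw [← huv]; ring
  -- for `x + y = 0` the quotient is `0` by the convention `r / 0 = 0`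
  refine div_le_of_le_mul₀ (by positivity) (by positivity) ?_
  calc ‖t • x + (1 - t) • y‖ * ‖(1 - t) • x + t • y‖
      ≤ (c * ‖x + y‖) * (c * ‖x + y‖) :=
        mul_le_mul (bound _ _ rfl) (bound _ _ (add_comm _ _)) (norm_nonneg _) (by positivity)
    _ = c ^ 2 * ‖x + y‖ ^ 2 := by ring

lemma mul_norm_add_smul_norm_sub_smul_div_four_le_CZI (τ : ℝ) {a b : X}
    (ha : ‖a‖ = 1) (hb : ‖b‖ = 1) :
    ‖a + τ • b‖ * ‖a - τ • b‖ / 4 ≤ CZI X ((1 - τ) / 2) := by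
  refine le_csSup (bddAbove_CZI_set _) ⟨a + b, a - b, ?_, ?_, ?_⟩
  · intro hab
    obtain ⟨h₁, h₂⟩ := Prod.mk_inj.mp hab
    have : a = (2⁻¹ : ℝ) • ((a + b) + (a - b)) := by module
    rw [h₁, h₂, add_zero, smul_zero] at this
    simp [this] at ha
  · have e₁ : (a + b) + (a - b) = (2 : ℝ) • a := by module
    have e₂ : (a + b) - (a - b) = (2 : ℝ) • b := by module
    rw [e₁, e₂, norm_smul, norm_smul, ha, hb]
  · have e₁ : ((1 - τ) / 2) • (a + b) + (1 - (1 - τ) / 2) • (a - b) = a - τ • b := by module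
    have e₂ : (1 - (1 - τ) / 2) • (a + b) + ((1 - τ) / 2) • (a - b) = a + τ • b := by module
    have e₃ : (a + b) + (a - b) = (2 : ℝ) • a := by module
    rw [e₁, e₂, e₃, norm_smul, ha, Real.norm_two]
    ring

lemma bddAbove_rhoX_set (τ : ℝ) :
    BddAbove { r : ℝ | ∃ x y : X, ‖x‖ = 1 ∧ ‖y‖ = 1 ∧
      r = (‖x + τ • y‖ + ‖x - τ • y‖) / 2 - 1 } := by
  refine ⟨|τ|, ?_⟩
  rintro r ⟨x, y, hx, hy, rfl⟩
  have h₁ := norm_add_le x (τ • y)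
  have h₂ := norm_sub_le x (τ • y)
  rw [norm_smul, hx, hy, Real.norm_eq_abs] at h₁ h₂
  linarith

variable [Nontrivial X]

lemma rhoX_nonneg (τ : ℝ) : 0 ≤ rhoX X τ := by
  obtain ⟨a, ha⟩ := exists_norm_eq X zero_le_one
  refine le_trans ?_ (le_csSup (bddAbove_rhoX_set τ) ⟨a, a, ha, ha, rfl⟩)
  have h2 : (2 : ℝ) • a = (a + τ • a) + (a - τ • a) := by module
  have := norm_add_le (a + τ • a) (a - τ • a)
  rw [← h2, norm_smul, ha, Real.norm_two] at this
  linarith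

lemma rhoX_le_CZI (τ : ℝ) : rhoX X τ ≤ 2 * CZI X ((1 - τ) / 2) - 1 / 2 + τ ^ 2 / 2 := by
  obtain ⟨a₀, ha₀⟩ := exists_norm_eq X zero_le_one
  refine csSup_le ⟨_, a₀, a₀, ha₀, ha₀, rfl⟩ ?_
  rintro r ⟨a, b, ha, hb, rfl⟩
  have hCZI := mul_norm_add_smul_norm_sub_smul_div_four_le_CZI τ ha hb
  have hdiff : |‖a + τ • b‖ - ‖a - τ • b‖| ≤ |2 * τ| := by
    have e : (a + τ • b) - (a - τ • b) = (2 * τ) • b := by module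
    simpa [e, norm_smul, hb] using abs_norm_sub_norm_le (a + τ • b) (a - τ • b)
  linarith [add_div_two_sub_one_le (sq_le_sq.mpr hdiff)]

end NormedSpace

theorem stmt_14_general (X : Type*) [NormedAddCommGroup X] [NormedSpace ℝ X]
    [Nontrivial X]
    (h : Tendsto (fun t : ℝ => (2 * CZI X t - 1 / 2) / (1 - 2 * t))
      (nhdsWithin (1 / 2) (Iio (1 / 2))) (nhds 0)) :
    Tendsto (fun t : ℝ => rhoX X t / t) (nhdsWithin 0 (Ioi 0)) (nhds 0) := by
  have hCZI : Tendsto (fun τ : ℝ => (2 * CZI X ((1 - τ) / 2) - 1 / 2) / τ)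
      (nhdsWithin 0 (Ioi 0)) (nhds 0) :=
    (h.comp tendsto_one_sub_div_two_nhdsGT_zero).congr fun τ => by
      simp only [Function.comp, show 1 - 2 * ((1 - τ) / 2) = τ by ring]
  have hτ : Tendsto (fun τ : ℝ => τ / 2) (nhdsWithin 0 (Ioi 0)) (nhds 0) := by
    simpa using (tendsto_id.div_const (2 : ℝ)).mono_left (nhdsWithin_le_nhds (a := (0 : ℝ)))
  have hbound : Tendsto (fun τ : ℝ => (2 * CZI X ((1 - τ) / 2) - 1 / 2) / τ + τ / 2)
      (nhdsWithin 0 (Ioi 0)) (nhds 0) := by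
    simpa using hCZI.add hτ
  refine squeeze_zero' ?_ ?_ hbound
  · filter_upwards [self_mem_nhdsWithin] with τ (hτ : 0 < τ)
    exact div_nonneg (rhoX_nonneg τ) hτ.le
  · filter_upwards [self_mem_nhdsWithin] with τ (hτ : 0 < τ)
    calc rhoX X τ / τ ≤ (2 * CZI X ((1 - τ) / 2) - 1 / 2 + τ ^ 2 / 2) / τ := by
          gcongr
          exact rhoX_le_CZI τ
      _ = (2 * CZI X ((1 - τ) / 2) - 1 / 2) / τ + τ / 2 := by field_simp

theorem stmt_14 (X : Type*) [NormedAddCommGroup X] [NormedSpace ℝ X]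
    [CompleteSpace X] [Nontrivial X]
    (h : Tendsto (fun t : ℝ => (2 * CZI X t - 1 / 2) / (1 - 2 * t))
      (nhdsWithin (1 / 2) (Iio (1 / 2))) (nhds 0)) :
    Tendsto (fun t : ℝ => rhoX X t / t) (nhdsWithin 0 (Ioi 0)) (nhds 0) :=
  stmt_14_general X h
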